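/- arXiv:2512.18521 — 3 statements merged into one kernel-verified Lean document; each statement's English description precedes it below -/
import Mathlib

section
/- Let K be a field and let L₁, L₂, L₃ be 2-dimensional linear subspaces of K⁴ that pairwise intersect trivially (i.e., the corresponding three lines in ℙ³ are pairwise disjoint). Then there exists a nonzero quadratic form q on K⁴ that vanishes on L₁, L₂, and L₃; moreover every quadratic form on K⁴ vanishing on L₁, L₂, and L₃ is a scalar multiple of q, and the polar bilinear form of q (given by polar(q)(x,y) = q(x+y) − q(x) − q(y)) is nondegenerate. In other words, there is a unique smooth quadric surface in ℙ³ containing three given pairwise disjoint lines. -/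
/-!
Since `L₁ ⊕ L₂` is the whole space and `L₃` meets both summands trivially, `L₃` is the graph of
an isomorphism `L₁ → L₂`. Projecting a basis `fᵢ` of `L₃` onto `L₁` and `L₂` gives a basis
`e₀, e₁, g₀, g₁` with `L₁ = ⟨e₀, e₁⟩`, `L₂ = ⟨g₀, g₁⟩` and `L₃ = ⟨e₀ + g₀, e₁ + g₁⟩`, in whose
coordinates `x₀₀x₁₁ - x₀₁x₁₀` vanishes on the three planes and is smooth. A form vanishing on
`L₁` and `L₂` is determined by the pairing `polar q (eᵢ, gⱼ)`; vanishing on `L₃` makes this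
`2 × 2` matrix alternating, hence a multiple of the determinant.
-/

open Module Submodule QuadraticMap Function Set

theorem Module.Basis.span_range_coe {R M ι : Type*} [Semiring R] [AddCommMonoid M] [Module R M]
    {p : Submodule R M} (e : Basis ι R p) : span R (range fun i ↦ (e i : M)) = p :=
  (span_range_subtype_eq_top_iff p fun i ↦ (e i).2).1 (by simp)

theorem Submodule.injective_projectionOnto_comp_subtype {R M : Type*} [Ring R] [AddCommGroup M]
    [Module R M] {p q r : Submodule R M} (h : IsCompl p q) (hqr : q ⊓ r = ⊥) :
    Injective (p.projectionOnto q h ∘ₗ r.subtype) := by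
  rw [← LinearMap.ker_eq_bot, LinearMap.ker_comp, ker_projectionOnto, ← disjoint_iff_comap_eq_bot,
    disjoint_iff, inf_comm, hqr]

theorem exists_basis_sum_span_eq_of_isCompl {K V ι : Type*} [Field K] [AddCommGroup V]
    [Module K V] [FiniteDimensional K V] {L₁ L₂ L₃ : Submodule K V} (h : IsCompl L₁ L₂)
    (h₁₃ : L₁ ⊓ L₃ = ⊥) (h₂₃ : L₂ ⊓ L₃ = ⊥)
    (hr₁ : finrank K L₃ = finrank K L₁) (hr₂ : finrank K L₃ = finrank K L₂) (f : Basis ι K L₃) :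
    ∃ b : Basis (ι ⊕ ι) K V, span K (range (b ∘ Sum.inl)) = L₁ ∧
      span K (range (b ∘ Sum.inr)) = L₂ ∧
      span K (range fun i ↦ b (.inl i) + b (.inr i)) = L₃ := by
  let e := f.map ((L₁.projectionOnto L₂ h ∘ₗ L₃.subtype).linearEquivOfInjective
    (injective_projectionOnto_comp_subtype h h₂₃) hr₁)
  let g := f.map ((L₂.projectionOnto L₁ h.symm ∘ₗ L₃.subtype).linearEquivOfInjective
    (injective_projectionOnto_comp_subtype h.symm h₁₃) hr₂)
  refine ⟨(e.prod g).map (prodEquivOfIsCompl L₁ L₂ h), ?_, ?_, ?_⟩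
  · simpa [comp_def] using e.span_range_coe
  · simpa [comp_def] using g.span_range_coe
  · convert f.span_range_coe using 4 with i
    simp [e, g, projection_add_projection_eq_self]

theorem QuadraticMap.polar_eq_zero_of_forall_mem_eq_zero {R M N : Type*} [CommRing R]
    [AddCommGroup M] [Module R M] [AddCommGroup N] [Module R N] {Q : QuadraticMap R M N}
    {p : Submodule R M} (hQ : ∀ x ∈ p, Q x = 0) {x y : M} (hx : x ∈ p) (hy : y ∈ p) :
    polar Q x y = 0 := by
  simp [polar, hQ _ hx, hQ _ hy, hQ _ (p.add_mem hx hy)]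

namespace Module.Basis

variable {K V : Type*} [CommRing K] [AddCommGroup V] [Module K V]
  (b : Basis (Fin 2 ⊕ Fin 2) K V)

/-- Writing `x = (u, v)` with `u, v ∈ K²` in the basis `b`, this is `det [u; v]`: the Segre
quadric `ℙ¹ × ℙ¹ ⊆ ℙ³`. -/
noncomputable def segreQuadric : QuadraticForm K V :=
  linMulLin (b.coord (.inl 0)) (b.coord (.inr 1)) - linMulLin (b.coord (.inl 1)) (b.coord (.inr 0))

theorem segreQuadric_apply (x : V) : b.segreQuadric x =
    b.repr x (.inl 0) * b.repr x (.inr 1) - b.repr x (.inl 1) * b.repr x (.inr 0) := rfl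

theorem polar_segreQuadric (x y : V) : polar b.segreQuadric x y =
    b.repr x (.inl 0) * b.repr y (.inr 1) + b.repr y (.inl 0) * b.repr x (.inr 1)
      - b.repr x (.inl 1) * b.repr y (.inr 0) - b.repr y (.inl 1) * b.repr x (.inr 0) := by
  simp only [polar, segreQuadric_apply, map_add, Finsupp.add_apply]
  ring

theorem segreQuadric_ne_zero [Nontrivial K] : b.segreQuadric ≠ 0 := fun h ↦ by
  simpa [segreQuadric_apply] using congr($h (b (.inl 0) + b (.inr 1)))

theorem eq_zero_of_forall_polar_segreQuadric_eq_zero {x : V}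
    (hx : ∀ y, polar b.segreQuadric x y = 0) : x = 0 := by
  refine b.forall_coord_eq_zero_iff.1 ?_
  rintro (i | i) <;> fin_cases i
  · simpa [polar_segreQuadric] using hx (b (.inr 1))
  · simpa [polar_segreQuadric] using hx (b (.inr 0))
  · simpa [polar_segreQuadric] using hx (b (.inl 1))
  · simpa [polar_segreQuadric] using hx (b (.inl 0))

theorem segreQuadric_eq_zero_of_mem_span_inl {x : V} (hx : x ∈ span K (range (b ∘ Sum.inl))) :
    b.segreQuadric x = 0 := by
  have hle (j : Fin 2) : span K (range (b ∘ Sum.inl)) ≤ LinearMap.ker (b.coord (.inr j)) :=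
    span_le.2 <| range_subset_iff.2 fun i ↦ by simp
  have hzero (j : Fin 2) : b.repr x (.inr j) = 0 := LinearMap.mem_ker.1 (hle j hx)
  simp [segreQuadric_apply, hzero]

theorem segreQuadric_eq_zero_of_mem_span_inr {x : V} (hx : x ∈ span K (range (b ∘ Sum.inr))) :
    b.segreQuadric x = 0 := by
  have hle (j : Fin 2) : span K (range (b ∘ Sum.inr)) ≤ LinearMap.ker (b.coord (.inl j)) :=
    span_le.2 <| range_subset_iff.2 fun i ↦ by simp
  have hzero (j : Fin 2) : b.repr x (.inl j) = 0 := LinearMap.mem_ker.1 (hle j hx)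
  simp [segreQuadric_apply, hzero]

theorem segreQuadric_eq_zero_of_mem_span_inl_add_inr {x : V}
    (hx : x ∈ span K (range fun i ↦ b (.inl i) + b (.inr i))) : b.segreQuadric x = 0 := by
  have hle (j : Fin 2) : span K (range fun i ↦ b (.inl i) + b (.inr i)) ≤
      LinearMap.ker (b.coord (.inl j) - b.coord (.inr j)) :=
    span_le.2 <| range_subset_iff.2 fun i ↦ by simp [Finsupp.single_apply]
  have hdiag (j : Fin 2) : b.repr x (.inl j) = b.repr x (.inr j) :=
    sub_eq_zero.1 (LinearMap.mem_ker.1 (hle j hx))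
  rw [segreQuadric_apply, hdiag, hdiag]
  ring

theorem eq_smul_segreQuadric {Q : QuadraticForm K V}
    (h₁ : ∀ x ∈ span K (range (b ∘ Sum.inl)), Q x = 0)
    (h₂ : ∀ x ∈ span K (range (b ∘ Sum.inr)), Q x = 0)
    (h₃ : ∀ x ∈ span K (range fun i ↦ b (.inl i) + b (.inr i)), Q x = 0) :
    Q = polar Q (b (.inl 0)) (b (.inr 1)) • b.segreQuadric := by
  have hu (i : Fin 2) : b (.inl i) ∈ span K (range (b ∘ Sum.inl)) := subset_span ⟨i, rfl⟩
  have hv (i : Fin 2) : b (.inr i) ∈ span K (range (b ∘ Sum.inr)) := subset_span ⟨i, rfl⟩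
  have hw (i : Fin 2) : b (.inl i) + b (.inr i) ∈ span K (range fun i ↦ b (.inl i) + b (.inr i)) :=
    subset_span ⟨i, rfl⟩
  have hdiag (i : Fin 2) : polar Q (b (.inl i)) (b (.inr i)) = 0 := by
    simpa [QuadraticMap.map_add, h₁ _ (hu i), h₂ _ (hv i)] using h₃ _ (hw i)
  have hanti : polar Q (b (.inl 1)) (b (.inr 0)) = - polar Q (b (.inl 0)) (b (.inr 1)) := by
    have h := polar_eq_zero_of_forall_mem_eq_zero h₃ (hw 0) (hw 1)
    simp only [polar_add_left, polar_add_right,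
      polar_eq_zero_of_forall_mem_eq_zero h₁ (hu 0) (hu 1),
      polar_eq_zero_of_forall_mem_eq_zero h₂ (hv 0) (hv 1), polar_comm Q (b (.inr 0))] at h
    linear_combination h
  ext x
  set u := b.repr x (.inl 0) • b (.inl 0) + b.repr x (.inl 1) • b (.inl 1)
  set v := b.repr x (.inr 0) • b (.inr 0) + b.repr x (.inr 1) • b (.inr 1)
  have hx : x = u + v :=
    calc x = ∑ i, b.repr x i • b i := (b.sum_repr x).symm
      _ = u + v := by rw [Fintype.sum_sum_type, Fin.sum_univ_two, Fin.sum_univ_two]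
  have hQu : Q u = 0 := h₁ u (add_mem (smul_mem _ _ (hu 0)) (smul_mem _ _ (hu 1)))
  have hQv : Q v = 0 := h₂ v (add_mem (smul_mem _ _ (hv 0)) (smul_mem _ _ (hv 1)))
  calc Q x = polar Q u v := by rw [hx, QuadraticMap.map_add Q, hQu, hQv, zero_add, zero_add]
    _ = polar Q (b (.inl 0)) (b (.inr 1)) * b.segreQuadric x := by
      simp only [u, v, polar_add_left, polar_add_right, polar_smul_left, polar_smul_right, hdiag,
        hanti, smul_eq_mul, segreQuadric_apply]
      ring

end Module.Basis

/-- **Unique smooth quadric through three pairwise skew lines.**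
Let `K` be a field and `L₁, L₂, L₃` be 2-dimensional linear subspaces of `K⁴`
that pairwise intersect trivially (three pairwise disjoint lines in `ℙ³`).
Then there is a nonzero quadratic form `q` on `K⁴` vanishing on `L₁, L₂, L₃`;
every quadratic form vanishing on the three subspaces is a scalar multiple of `q`;
and the polar bilinear form of `q` is nondegenerate. -/
theorem unique_smooth_quadric_through_three_skew_lines
    (K : Type*) [Field K]
    (L₁ L₂ L₃ : Submodule K (Fin 4 → K))
    (hdim₁ : Module.finrank K L₁ = 2)
    (hdim₂ : Module.finrank K L₂ = 2)
    (hdim₃ : Module.finrank K L₃ = 2)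
    (h₁₂ : L₁ ⊓ L₂ = ⊥) (h₁₃ : L₁ ⊓ L₃ = ⊥) (h₂₃ : L₂ ⊓ L₃ = ⊥) :
    ∃ q : QuadraticForm K (Fin 4 → K),
      q ≠ 0 ∧
      (∀ x ∈ L₁, q x = 0) ∧ (∀ x ∈ L₂, q x = 0) ∧ (∀ x ∈ L₃, q x = 0) ∧
      (∀ q' : QuadraticForm K (Fin 4 → K),
        (∀ x ∈ L₁, q' x = 0) → (∀ x ∈ L₂, q' x = 0) → (∀ x ∈ L₃, q' x = 0) →
        ∃ c : K, q' = c • q) ∧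
      (∀ x : Fin 4 → K, (∀ y : Fin 4 → K, QuadraticMap.polar q x y = 0) → x = 0) := by
  have hcompl : IsCompl L₁ L₂ :=
    (isCompl_iff_disjoint L₁ L₂ (by simp [hdim₁, hdim₂])).2 (disjoint_iff.2 h₁₂)
  obtain ⟨b, rfl, rfl, rfl⟩ := exists_basis_sum_span_eq_of_isCompl hcompl h₁₃ h₂₃
    (hdim₃.trans hdim₁.symm) (hdim₃.trans hdim₂.symm) (finBasisOfFinrankEq K L₃ hdim₃)
  exact ⟨b.segreQuadric, b.segreQuadric_ne_zero, fun _ ↦ b.segreQuadric_eq_zero_of_mem_span_inl,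
    fun _ ↦ b.segreQuadric_eq_zero_of_mem_span_inr,
    fun _ ↦ b.segreQuadric_eq_zero_of_mem_span_inl_add_inr,
    fun _ h₁ h₂ h₃ ↦ ⟨_, b.eq_smul_segreQuadric h₁ h₂ h₃⟩,
    fun _ ↦ b.eq_zero_of_forall_polar_segreQuadric_eq_zero⟩
end

section
/- Let K be a field and let L ⊆ K⁴ be a 2-dimensional subspace on which the Segre quadratic form q(x₀,x₁,x₂,x₃) = x₀x₃ − x₁x₂ vanishes identically. Then either L = ℓ(u,v) for some (u,v) ∈ K² ∖ {0} or L = m(s,t) for some (s,t) ∈ K² ∖ {0}. That is, every line contained in the smooth quadric V(x₀x₃ − x₁x₂) ⊂ ℙ³ belongs to one of its two rulings. -/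
/-!
Read `x ∈ K⁴` as the 2×2 matrix `[[x₀, x₁], [x₂, x₃]]`, so that the Segre form is its
determinant. A nonzero isotropic vector is then a rank-one matrix `c rᵀ`; the first ruling
consists of the lines with a fixed row `r`, the second of those with a fixed column `c`.
For two such vectors, `q(c rᵀ + d sᵀ) = det(c, d) · det(r, s)`, so if the quadric contains
the line they span, then their rows or their columns are proportional, which puts the line
in a ruling; equality follows by comparing dimensions.
-/

/-- The line `ℓ(u,v)` of the first ruling of the Segre quadric:
the subspace of `K⁴` spanned by `(u,v,0,0)` and `(0,0,u,v)`. -/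
def rulingL (K : Type*) [Field K] (u v : K) : Submodule K (Fin 4 → K) :=
  Submodule.span K {![u, v, 0, 0], ![0, 0, u, v]}

/-- The line `m(s,t)` of the second ruling of the Segre quadric:
the subspace of `K⁴` spanned by `(s,0,t,0)` and `(0,s,0,t)`. -/
def rulingM (K : Type*) [Field K] (s t : K) : Submodule K (Fin 4 → K) :=
  Submodule.span K {![s, 0, t, 0], ![0, s, 0, t]}

open Module Submodule

section SpanPair

variable {K V : Type*} [Field K] [AddCommGroup V] [Module K V]

theorem finrank_span_pair_le [DecidableEq V] (a b : V) : finrank K (span K {a, b}) ≤ 2 := by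
  have h := finrank_span_finset_le_card (R := K) ({a, b} : Finset V)
  rw [Finset.coe_pair] at h
  exact h.trans Finset.card_le_two

theorem span_pair_eq_of_mem {e f a b : V} (hdim : finrank K (span K {e, f}) = 2)
    (he : e ∈ span K {a, b}) (hf : f ∈ span K {a, b}) : span K {e, f} = span K {a, b} := by
  classical
  have := FiniteDimensional.span_of_finite K (Set.toFinite {a, b})
  exact eq_of_le_of_finrank_le (span_le.mpr (Set.pair_subset he hf))
    (hdim ▸ finrank_span_pair_le a b)

theorem exists_eq_span_pair_of_finrank_eq_two (L : Submodule K V) (hL : finrank K L = 2) :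
    ∃ e f : V, e ≠ 0 ∧ f ≠ 0 ∧ L = span K {e, f} := by
  have := Module.finite_of_finrank_eq_succ hL
  let b := Module.finBasisOfFinrankEq K L hL
  refine ⟨b 0, b 1, by simpa using b.ne_zero 0, by simpa using b.ne_zero 1, ?_⟩
  have hrange : L.subtype '' Set.range b = {(b 0 : V), (b 1 : V)} := by
    ext; simp [Fin.exists_fin_two, eq_comm]
  rw [← hrange, ← map_span, b.span_eq, map_subtype_top]

end SpanPair

section Segre

variable {K : Type*} [Field K]

def segreForm (x : Fin 4 → K) : K := x 0 * x 3 - x 1 * x 2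

/-- The rank-one matrix `c rᵀ`, i.e. the Segre embedding `ℙ¹ × ℙ¹ → ℙ³`. -/
def segre (c r : K × K) : Fin 4 → K := ![c.1 * r.1, c.1 * r.2, c.2 * r.1, c.2 * r.2]

theorem segre_mem_rulingL (c r : K × K) : segre c r ∈ rulingL K r.1 r.2 :=
  mem_span_pair.mpr ⟨c.1, c.2, by ext i; fin_cases i <;> simp [segre]⟩

theorem segre_mem_rulingM (c r : K × K) : segre c r ∈ rulingM K c.1 c.2 :=
  mem_span_pair.mpr ⟨r.1, r.2, by ext i; fin_cases i <;> simp [segre, mul_comm]⟩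

theorem segre_smul_right (c r : K × K) (l : K) : segre c (l • r) = segre (l • c) r := by
  ext i; fin_cases i <;> simp [segre] <;> ring

theorem segreForm_segre_add_segre (c r d s : K × K) :
    segreForm (segre c r + segre d s) = (c.1 * d.2 - c.2 * d.1) * (r.1 * s.2 - r.2 * s.1) := by
  simp only [segreForm, segre, Pi.add_apply, Matrix.cons_val_zero, Matrix.cons_val,
    Matrix.cons_val_one]
  ring

theorem exists_eq_smul_of_mul_sub_mul_eq_zero {r s : K × K} (hr : r ≠ 0)
    (h : r.1 * s.2 - r.2 * s.1 = 0) : ∃ l : K, s = l • r := by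
  obtain ⟨r₁, r₂⟩ := r
  obtain ⟨s₁, s₂⟩ := s
  dsimp only at h
  simp only [Prod.smul_mk, smul_eq_mul, Prod.mk.injEq]
  by_cases h₁ : r₁ = 0
  · have h₂ : r₂ ≠ 0 := by rintro rfl; exact hr (by rw [h₁]; rfl)
    have hs₁ : s₁ = 0 := by simpa [h₁, h₂] using h
    exact ⟨s₂ / r₂, by simp [h₁, hs₁], by field_simp⟩
  · exact ⟨s₁ / r₁, by field_simp, by field_simp; linear_combination h⟩

theorem exists_eq_segre {x : Fin 4 → K} (hx : x ≠ 0) (h : segreForm x = 0) :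
    ∃ c r : K × K, c ≠ 0 ∧ r ≠ 0 ∧ x = segre c r := by
  by_cases hrow : (x 0, x 1) = 0
  · simp only [Prod.mk_eq_zero] at hrow
    have hrow' : (x 2, x 3) ≠ 0 := by
      intro h'
      simp only [Prod.mk_eq_zero] at h'
      exact hx (by ext i; fin_cases i <;> simp [hrow, h'])
    refine ⟨(0, 1), (x 2, x 3), by simp, hrow', ?_⟩
    ext i; fin_cases i <;> simp [segre, hrow]
  · obtain ⟨l, hl⟩ := exists_eq_smul_of_mul_sub_mul_eq_zero (s := (x 2, x 3)) hrow h
    simp only [Prod.ext_iff, Prod.smul_mk, smul_eq_mul] at hl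
    refine ⟨(1, l), (x 0, x 1), by simp, hrow, ?_⟩
    ext i; fin_cases i <;> simp [segre, hl]

theorem exists_common_ruling_of_segreForm_eq_zero {e f : Fin 4 → K} (he : e ≠ 0) (hf : f ≠ 0)
    (hqe : segreForm e = 0) (hqf : segreForm f = 0) (hqef : segreForm (e + f) = 0) :
    (∃ r : K × K, r ≠ 0 ∧ e ∈ rulingL K r.1 r.2 ∧ f ∈ rulingL K r.1 r.2) ∨
    (∃ c : K × K, c ≠ 0 ∧ e ∈ rulingM K c.1 c.2 ∧ f ∈ rulingM K c.1 c.2) := by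
  obtain ⟨c, r, hc, hr, rfl⟩ := exists_eq_segre he hqe
  obtain ⟨d, s, -, -, rfl⟩ := exists_eq_segre hf hqf
  rw [segreForm_segre_add_segre, mul_eq_zero] at hqef
  rcases hqef with hcd | hrs
  · obtain ⟨l, rfl⟩ := exists_eq_smul_of_mul_sub_mul_eq_zero hc hcd
    refine .inr ⟨c, hc, segre_mem_rulingM c r, ?_⟩
    rw [← segre_smul_right]
    exact segre_mem_rulingM c _
  · obtain ⟨l, rfl⟩ := exists_eq_smul_of_mul_sub_mul_eq_zero hr hrs
    refine .inl ⟨r, hr, segre_mem_rulingL c r, ?_⟩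
    rw [segre_smul_right]
    exact segre_mem_rulingL _ r

end Segre

/-- **Every line on the Segre quadric lies in one of the two rulings.**
If `L ⊆ K⁴` is a 2-dimensional subspace on which the Segre form
`x₀x₃ - x₁x₂` vanishes identically, then `L = ℓ(u,v)` for some `(u,v) ≠ 0`
or `L = m(s,t)` for some `(s,t) ≠ 0`. -/
theorem line_on_segre_quadric_is_in_a_ruling
    (K : Type*) [Field K] (L : Submodule K (Fin 4 → K))
    (hdim : Module.finrank K L = 2)
    (hq : ∀ x ∈ L, x 0 * x 3 - x 1 * x 2 = 0) :
    (∃ u v : K, (u, v) ≠ (0, 0) ∧ L = rulingL K u v) ∨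
    (∃ s t : K, (s, t) ≠ (0, 0) ∧ L = rulingM K s t) := by
  obtain ⟨e, f, he, hf, rfl⟩ := exists_eq_span_pair_of_finrank_eq_two L hdim
  have he' : e ∈ span K {e, f} := subset_span (by simp)
  have hf' : f ∈ span K {e, f} := subset_span (by simp)
  rcases exists_common_ruling_of_segreForm_eq_zero he hf (hq e he') (hq f hf')
      (hq _ (add_mem he' hf')) with ⟨r, hr, her, hfr⟩ | ⟨c, hc, hec, hfc⟩
  · exact .inl ⟨r.1, r.2, hr, span_pair_eq_of_mem hdim her hfr⟩
  · exact .inr ⟨c.1, c.2, hc, span_pair_eq_of_mem hdim hec hfc⟩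
end

section
/- Let D, g ∈ ℂ[X] be polynomials such that D ≠ 0, g is not a scalar multiple of D, and D and g have no common complex root. Then for all but finitely many c ∈ ℂ, the polynomial c·D + g has degree equal to max(deg D, deg g), is squarefree (all its complex roots are simple), and has no root in common with D. (Generic fibers of the rational function −g/D are reduced and avoid the poles.) -/
/-!
For the Wronskian `W(a, b) = a b' - a' b` one has `W(D, cD + g) = W(D, g)`, so at a multiple root
`z` of `cD + g` the Wronskian `W(D, g)` vanishes, while `D(z) ≠ 0` because `D` and `g` have no
common root; hence `c = -g(z)/D(z)` for one of the finitely many roots `z` of `W(D, g)`. That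
Wronskian is nonzero: for coprime `D, g` in characteristic zero, `W(D, g) = 0` forces both to be
constant, hence proportional. The degree of `cD + g` can only drop for `c = 0` or
`c = -lc(g)/lc(D)`.
-/

open Polynomial

namespace Polynomial

variable {K : Type*} [Field K]

theorem natDegree_C_mul_add_eq_max {D g : K[X]} {c : K} (hc : c ≠ 0)
    (hlc : c * D.leadingCoeff + g.leadingCoeff ≠ 0) :
    (C c * D + g).natDegree = max D.natDegree g.natDegree := by
  rw [← leadingCoeff_C c, ← leadingCoeff_mul] at hlc
  have h := degree_add_eq_of_leadingCoeff_add_ne_zero hlc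
  rw [degree_C_mul hc] at h
  refine le_antisymm ((natDegree_add_le _ _).trans_eq (by rw [natDegree_C_mul hc])) ?_
  exact max_le (natDegree_le_natDegree (h ▸ le_max_left _ _))
    (natDegree_le_natDegree (h ▸ le_max_right _ _))

theorem isCoprime_iff_forall_eval_ne_zero [IsAlgClosed K] {p q : K[X]} :
    IsCoprime p q ↔ ∀ z, p.eval z ≠ 0 ∨ q.eval z ≠ 0 :=
  isCoprime_iff_aeval_ne_zero_of_isAlgClosed (k := K) K p q

theorem squarefree_of_forall_isRoot_eval_derivative_ne_zero [IsAlgClosed K] {p : K[X]}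
    (h : ∀ z, p.IsRoot z → (derivative p).eval z ≠ 0) : Squarefree p :=
  Separable.squarefree <| isCoprime_iff_forall_eval_ne_zero.2 fun z =>
    (em' (p.IsRoot z)).imp_right (h z)

theorem wronskian_C_mul_add_right (c : K) (a b : K[X]) :
    wronskian a (C c * a + b) = wronskian a b := by
  rw [wronskian_add_right, ← smul_eq_C_mul, ← wronskianBilin_apply, map_smul,
    wronskianBilin_apply, wronskian_self_eq_zero, smul_zero, zero_add]

theorem isRoot_wronskian_of_isRoot_of_isRoot_derivative {a p : K[X]} {z : K}
    (hp : p.IsRoot z) (hp' : (derivative p).IsRoot z) : (wronskian a p).IsRoot z := by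
  simp_all [wronskian]

theorem _root_.IsCoprime.exists_eq_smul_of_wronskian_eq_zero [CharZero K] {a b : K[X]}
    (hab : IsCoprime a b) (ha : a ≠ 0) (hw : wronskian a b = 0) : ∃ c : K, b = c • a := by
  obtain ⟨ha', hb'⟩ := hab.wronskian_eq_zero_iff.1 hw
  rw [eq_C_of_derivative_eq_zero ha'] at ha ⊢
  rw [eq_C_of_derivative_eq_zero hb']
  refine ⟨b.coeff 0 / a.coeff 0, ?_⟩
  rw [smul_C, smul_eq_mul, div_mul_cancel₀ _ (C_ne_zero.1 ha)]

end Polynomial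

/-- **Generic fibers of a rational function are reduced and avoid the poles.**
Let `D, g ∈ ℂ[X]` with `D ≠ 0`, `g` not a scalar multiple of `D`, and `D, g`
without common complex root.  Then for all but finitely many `c ∈ ℂ`, the
polynomial `c·D + g` has degree `max(deg D, deg g)`, is squarefree, and has no
root in common with `D`. -/
theorem generic_fiber_of_rational_function_reduced
    (D g : Polynomial ℂ) (hD : D ≠ 0)
    (hg : ¬ ∃ c : ℂ, g = c • D)
    (hcop : ∀ z : ℂ, ¬ (D.eval z = 0 ∧ g.eval z = 0)) :
    {c : ℂ | ¬ ((Polynomial.C c * D + g).natDegree = max D.natDegree g.natDegree ∧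
      Squarefree (Polynomial.C c * D + g) ∧
      ∀ z : ℂ, D.eval z = 0 → (Polynomial.C c * D + g).eval z ≠ 0)}.Finite := by
  have hDg : IsCoprime D g := isCoprime_iff_forall_eval_ne_zero.2 fun z => not_and_or.1 (hcop z)
  have hW : wronskian D g ≠ 0 := fun hW => hg (hDg.exists_eq_smul_of_wronskian_eq_zero hD hW)
  refine (((finite_setOfPred_isRoot hW).image fun z => -(g.eval z / D.eval z)).insert 0 |>.insert
    (-(g.leadingCoeff / D.leadingCoeff))).subset fun c hc => ?_
  by_contra hE
  simp only [Set.mem_insert_iff, Set.mem_image, Set.mem_ofPred_eq, not_or, not_exists,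
    not_and] at hE
  obtain ⟨hc_lc, hc0, hc_crit⟩ := hE
  have hfiber : ∀ z, (C c * D + g).eval z = c * D.eval z + g.eval z := by simp
  refine hc ⟨natDegree_C_mul_add_eq_max hc0 ?_,
    squarefree_of_forall_isRoot_eval_derivative_ne_zero fun z hz hz' => ?_,
    fun z hDz hpz => hcop z ⟨hDz, by simpa [hfiber, hDz] using hpz⟩⟩
  · have hlcD : D.leadingCoeff ≠ 0 := leadingCoeff_ne_zero.2 hD
    contrapose! hc_lc
    field_simp
    linear_combination hc_lc
  · have hz : c * D.eval z + g.eval z = 0 := hfiber z ▸ hz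
    have hDz : D.eval z ≠ 0 := fun h0 => hcop z ⟨h0, by simpa [h0] using hz⟩
    refine hc_crit z ?_ ?_
    · rw [← wronskian_C_mul_add_right c]
      exact isRoot_wronskian_of_isRoot_of_isRoot_derivative ((hfiber z).trans hz) hz'
    · field_simp
      linear_combination -hz
end
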